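/- arXiv:1906.04094 — 2 statements merged into one kernel-verified Lean document; each statement's English description precedes it below -/
import Mathlib

section
/- Let G be an interval graph given by a string representation S, and suppose vertices x and y form an edge such that in S the four occurrences of x and y occupy four consecutive positions i, i+1, i+2, i+3 holding x, y, y, x respectively. Then swapping the first occurrence of y (at position i+1) with the second occurrence of x (at position i+3) yields a string representation of G - (x,y); in particular (x,y) is an interval edge, i.e., G - (x,y) is an interval graph. -/
/-- A simple graph is an interval graph if its vertices can be assigned closed
real intervals such that two distinct vertices are adjacent iff their
intervals intersect. -/
def IsIntervalGraph {V : Type*} (G : SimpleGraph V) : Prop :=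
  ∃ l r : V → ℝ, (∀ v, l v ≤ r v) ∧
    ∀ u v : V, u ≠ v →
      (G.Adj u v ↔ (Set.Icc (l u) (r u) ∩ Set.Icc (l v) (r v)).Nonempty)

/-- A string representation: a sequence of length `2 * n` over `Fin n` in which
each element appears exactly twice. -/
def IsStringRep {n : ℕ} (S : Fin (2 * n) → Fin n) : Prop :=
  ∀ x : Fin n, (Finset.univ.filter (fun i => S i = x)).card = 2

/-- Position of the first occurrence of `x` in `S`. -/
noncomputable def firstOcc {n : ℕ} (S : Fin (2 * n) → Fin n) (x : Fin n) : ℕ :=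
  sInf {i : ℕ | ∃ h : i < 2 * n, S ⟨i, h⟩ = x}

/-- Position of the second (last) occurrence of `x` in `S`. -/
noncomputable def secondOcc {n : ℕ} (S : Fin (2 * n) → Fin n) (x : Fin n) : ℕ :=
  sSup {i : ℕ | ∃ h : i < 2 * n, S ⟨i, h⟩ = x}

/-- The interval graph encoded by a string representation: vertex `x`
corresponds to the interval `[firstOcc S x, secondOcc S x]` and adjacency is
interval intersection. -/
noncomputable def stringGraph {n : ℕ} (S : Fin (2 * n) → Fin n) : SimpleGraph (Fin n) :=
  SimpleGraph.fromRel fun i j =>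
    firstOcc S i ≤ secondOcc S j ∧ firstOcc S j ≤ secondOcc S i

set_option linter.all false

section Helpers

variable {n : ℕ}

lemma occ_nonempty {S : Fin (2 * n) → Fin n} (hS : IsStringRep S) (x : Fin n) :
    {j : ℕ | ∃ h : j < 2 * n, S ⟨j, h⟩ = x}.Nonempty := by
  have h := hS x
  have h2 : (Finset.univ.filter (fun i => S i = x)).Nonempty := by
    rw [← Finset.card_pos, h]; omega
  obtain ⟨k, hk⟩ := h2
  simp only [Finset.mem_filter] at hk
  exact ⟨k.1, k.2, by simpa using hk.2⟩

lemma occ_bddAbove {S : Fin (2 * n) → Fin n} (x : Fin n) :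
    BddAbove {j : ℕ | ∃ h : j < 2 * n, S ⟨j, h⟩ = x} :=
  ⟨2 * n, fun j hj => by obtain ⟨h, _⟩ := hj; exact h.le⟩

lemma firstOcc_mem {S : Fin (2 * n) → Fin n} (hS : IsStringRep S) (x : Fin n) :
    ∃ h : firstOcc S x < 2 * n, S ⟨firstOcc S x, h⟩ = x :=
  Nat.sInf_mem (occ_nonempty hS x)

lemma secondOcc_mem {S : Fin (2 * n) → Fin n} (hS : IsStringRep S) (x : Fin n) :
    ∃ h : secondOcc S x < 2 * n, S ⟨secondOcc S x, h⟩ = x :=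
  Nat.sSup_mem (occ_nonempty hS x) (occ_bddAbove x)

lemma occSet_eq {S : Fin (2 * n) → Fin n} (hS : IsStringRep S)
    {x : Fin n} {a b : ℕ} (hab : a < b) (hb : b < 2 * n)
    (hSa : S ⟨a, by omega⟩ = x) (hSb : S ⟨b, hb⟩ = x) :
    {j : ℕ | ∃ h : j < 2 * n, S ⟨j, h⟩ = x} = {a, b} := by
  ext j
  simp only [Set.mem_setOf_eq, Set.mem_insert_iff, Set.mem_singleton_iff]
  constructor
  · rintro ⟨hj, hSj⟩
    by_contra hc
    push_neg at hc
    obtain ⟨hja, hjb⟩ := hc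
    have hsub : ({⟨a, by omega⟩, ⟨b, hb⟩, ⟨j, hj⟩} : Finset (Fin (2 * n))) ⊆
        Finset.univ.filter (fun i => S i = x) := by
      intro k hk
      simp only [Finset.mem_insert, Finset.mem_singleton] at hk
      rcases hk with rfl | rfl | rfl <;> simp [hSa, hSb, hSj]
    have hcard : ({⟨a, by omega⟩, ⟨b, hb⟩, ⟨j, hj⟩} : Finset (Fin (2 * n))).card = 3 := by
      rw [Finset.card_insert_of_notMem (by simp [Fin.ext_iff]; omega),
        Finset.card_insert_of_notMem (by simp [Fin.ext_iff]; omega),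
        Finset.card_singleton]
    have hle := Finset.card_le_card hsub
    rw [hS x, hcard] at hle
    omega
  · rintro (rfl | rfl)
    · exact ⟨by omega, hSa⟩
    · exact ⟨hb, hSb⟩

lemma firstOcc_eq {S : Fin (2 * n) → Fin n} (hS : IsStringRep S)
    {x : Fin n} {a b : ℕ} (hab : a < b) (hb : b < 2 * n)
    (hSa : S ⟨a, by omega⟩ = x) (hSb : S ⟨b, hb⟩ = x) :
    firstOcc S x = a := by
  unfold firstOcc
  rw [occSet_eq hS hab hb hSa hSb, csInf_pair]
  exact min_eq_left hab.le

lemma secondOcc_eq {S : Fin (2 * n) → Fin n} (hS : IsStringRep S)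
    {x : Fin n} {a b : ℕ} (hab : a < b) (hb : b < 2 * n)
    (hSa : S ⟨a, by omega⟩ = x) (hSb : S ⟨b, hb⟩ = x) :
    secondOcc S x = b := by
  unfold secondOcc
  rw [occSet_eq hS hab hb hSa hSb, csSup_pair]
  exact max_eq_right hab.le

lemma isStringRep_comp {S : Fin (2 * n) → Fin n} (hS : IsStringRep S)
    (e : Equiv.Perm (Fin (2 * n))) : IsStringRep (S ∘ e) := by
  intro x
  refine Eq.trans ?_ (hS x)
  apply Finset.card_bij' (fun a _ => e a) (fun b _ => e.symm b) <;> simp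

lemma stringGraph_adj {S : Fin (2 * n) → Fin n} {u v : Fin n} :
    (stringGraph S).Adj u v ↔ u ≠ v ∧
      (firstOcc S u ≤ secondOcc S v ∧ firstOcc S v ≤ secondOcc S u) := by
  simp only [stringGraph, SimpleGraph.fromRel_adj]
  tauto

lemma firstOcc_le_secondOcc {S : Fin (2 * n) → Fin n} (hS : IsStringRep S) (x : Fin n) :
    firstOcc S x ≤ secondOcc S x :=
  csInf_le_csSup (occ_nonempty hS x) (OrderBot.bddBelow _) (occ_bddAbove x)

lemma isIntervalGraph_stringGraph {S : Fin (2 * n) → Fin n} (hS : IsStringRep S) :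
    IsIntervalGraph (stringGraph S) := by
  refine ⟨fun v => (firstOcc S v : ℝ), fun v => (secondOcc S v : ℝ), ?_, ?_⟩
  · exact fun v => Nat.cast_le.2 (firstOcc_le_secondOcc hS v)
  · intro u v huv
    rw [stringGraph_adj]
    rw [Set.Icc_inter_Icc, Set.nonempty_Icc, sup_le_iff, le_inf_iff, le_inf_iff]
    simp only [Nat.cast_le]
    constructor
    · rintro ⟨-, hA, hB⟩
      exact ⟨⟨firstOcc_le_secondOcc hS u, hA⟩, hB, firstOcc_le_secondOcc hS v⟩
    · rintro ⟨⟨-, hA⟩, hB, -⟩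
      exact ⟨huv, hA, hB⟩

lemma val_at {S : Fin (2 * n) → Fin n} {j k : ℕ} (hj : j < 2 * n) (hk : k < 2 * n)
    (hjk : j = k) : S ⟨j, hj⟩ = S ⟨k, hk⟩ := by subst hjk; rfl

end Helpers

set_option maxHeartbeats 4000000 in
theorem stmt7aux {n : ℕ} (S : Fin (2 * n) → Fin n) (hS : IsStringRep S)
    (i : ℕ) (hi : i + 3 < 2 * n)
    (x y : Fin n) (hxy : x ≠ y)
    (h0 : S ⟨i, Nat.lt_of_le_of_lt (Nat.le_add_right i 3) hi⟩ = x) (h1 : S ⟨i + 1, Nat.lt_of_le_of_lt (Nat.add_le_add_left (Nat.le_of_ble_eq_true rfl : 1 ≤ 3) i) hi⟩ = y)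
    (h2 : S ⟨i + 2, Nat.lt_of_le_of_lt (Nat.add_le_add_left (Nat.le_of_ble_eq_true rfl : 2 ≤ 3) i) hi⟩ = y) (h3 : S ⟨i + 3, hi⟩ = x)
    (S' : Fin (2 * n) → Fin n)
    (hS'def : S' = S ∘ Equiv.swap ⟨i + 1, Nat.lt_of_le_of_lt (Nat.add_le_add_left (Nat.le_of_ble_eq_true rfl : 1 ≤ 3) i) hi⟩ ⟨i + 3, hi⟩) :
    stringGraph S' = (stringGraph S).deleteEdges {s(x, y)} ∧
    IsIntervalGraph ((stringGraph S).deleteEdges {s(x, y)}) := by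
  have hS' : IsStringRep S' := by rw [hS'def]; exact isStringRep_comp hS _
  have hv : ∀ (j : ℕ) (hj : j < 2 * n), j ≠ i + 1 → j ≠ i + 3 → S' ⟨j, hj⟩ = S ⟨j, hj⟩ := by
    intro j hj hj1 hj3
    rw [hS'def]
    simp only [Function.comp_apply]
    rw [Equiv.swap_apply_of_ne_of_ne (by simp only [ne_eq, Fin.mk.injEq]; omega)
      (by simp only [ne_eq, Fin.mk.injEq]; omega)]
  have h0' : S' ⟨i, by omega⟩ = x := by rw [hv i (by omega) (by omega) (by omega)]; exact h0
  have h1' : S' ⟨i + 1, by omega⟩ = x := by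
    rw [hS'def]
    simp only [Function.comp_apply]
    rw [Equiv.swap_apply_left]
    exact h3
  have h2' : S' ⟨i + 2, by omega⟩ = y := by
    rw [hv (i + 2) (by omega) (by omega) (by omega)]; exact h2
  have h3' : S' ⟨i + 3, hi⟩ = y := by
    rw [hS'def]
    simp only [Function.comp_apply]
    rw [Equiv.swap_apply_right]
    exact h1
  have fxS : firstOcc S x = i := firstOcc_eq hS (by omega) hi h0 h3
  have sxS : secondOcc S x = i + 3 := secondOcc_eq hS (by omega) hi h0 h3
  have fyS : firstOcc S y = i + 1 := firstOcc_eq hS (by omega) (by omega) h1 h2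
  have syS : secondOcc S y = i + 2 := secondOcc_eq hS (by omega) (by omega) h1 h2
  have fxS' : firstOcc S' x = i := firstOcc_eq hS' (by omega) (by omega) h0' h1'
  have sxS' : secondOcc S' x = i + 1 := secondOcc_eq hS' (by omega) (by omega) h0' h1'
  have fyS' : firstOcc S' y = i + 2 := firstOcc_eq hS' (by omega) hi h2' h3'
  have syS' : secondOcc S' y = i + 3 := secondOcc_eq hS' (by omega) hi h2' h3'
  have hset : ∀ z : Fin n, z ≠ x → z ≠ y →
      {j : ℕ | ∃ h : j < 2 * n, S' ⟨j, h⟩ = z} = {j : ℕ | ∃ h : j < 2 * n, S ⟨j, h⟩ = z} := by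
    intro z hzx hzy
    ext j
    simp only [Set.mem_setOf_eq]
    constructor
    · rintro ⟨hj, hj'⟩
      refine ⟨hj, ?_⟩
      by_cases hj1 : j = i + 1
      · exact absurd (((val_at hj (by omega) hj1).symm.trans hj').symm.trans h1') hzx
      · by_cases hj3 : j = i + 3
        · exact absurd (((val_at hj hi hj3).symm.trans hj').symm.trans h3') hzy
        · rw [← hv j hj hj1 hj3]; exact hj'
    · rintro ⟨hj, hj'⟩
      refine ⟨hj, ?_⟩
      by_cases hj1 : j = i + 1
      · exact absurd (((val_at hj (by omega) hj1).symm.trans hj').symm.trans h1) hzy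
      · by_cases hj3 : j = i + 3
        · exact absurd (((val_at hj hi hj3).symm.trans hj').symm.trans h3) hzx
        · rw [hv j hj hj1 hj3]; exact hj'
  have hfz : ∀ z : Fin n, z ≠ x → z ≠ y →
      firstOcc S' z = firstOcc S z ∧ secondOcc S' z = secondOcc S z := by
    intro z hzx hzy
    unfold firstOcc secondOcc
    rw [hset z hzx hzy]
    exact ⟨rfl, rfl⟩
  have hout : ∀ z : Fin n, z ≠ x → z ≠ y →
      (firstOcc S z < i ∨ i + 3 < firstOcc S z) ∧
      (secondOcc S z < i ∨ i + 3 < secondOcc S z) := by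
    intro z hzx hzy
    constructor
    · obtain ⟨h, hval⟩ := firstOcc_mem hS z
      by_contra hc
      push_neg at hc
      have hcases : firstOcc S z = i ∨ firstOcc S z = i + 1 ∨ firstOcc S z = i + 2 ∨
          firstOcc S z = i + 3 := by omega
      rcases hcases with hq | hq | hq | hq
      · exact hzx (hval.symm.trans ((val_at h (by omega) hq).trans h0))
      · exact hzy (hval.symm.trans ((val_at h (by omega) hq).trans h1))
      · exact hzy (hval.symm.trans ((val_at h (by omega) hq).trans h2))
      · exact hzx (hval.symm.trans ((val_at h hi hq).trans h3))
    · obtain ⟨h, hval⟩ := secondOcc_mem hS z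
      by_contra hc
      push_neg at hc
      have hcases : secondOcc S z = i ∨ secondOcc S z = i + 1 ∨ secondOcc S z = i + 2 ∨
          secondOcc S z = i + 3 := by omega
      rcases hcases with hq | hq | hq | hq
      · exact hzx (hval.symm.trans ((val_at h (by omega) hq).trans h0))
      · exact hzy (hval.symm.trans ((val_at h (by omega) hq).trans h1))
      · exact hzy (hval.symm.trans ((val_at h (by omega) hq).trans h2))
      · exact hzx (hval.symm.trans ((val_at h hi hq).trans h3))
  have key : ∀ u v : Fin n,
      ((firstOcc S' u ≤ secondOcc S' v ∧ firstOcc S' v ≤ secondOcc S' u) ↔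
       ((firstOcc S u ≤ secondOcc S v ∧ firstOcc S v ≤ secondOcc S u) ∧
        ¬(u = x ∧ v = y) ∧ ¬(u = y ∧ v = x))) := by
    intro u v
    by_cases hux : u = x
    · rw [hux]
      by_cases hvy : v = y
      · rw [hvy]
        rw [fxS', syS', fyS', sxS', fxS, syS, fyS, sxS]
        simp [hxy]
      · by_cases hvx : v = x
        · rw [hvx]
          rw [fxS', sxS', fxS, sxS]
          simp [hxy]
        · obtain ⟨hf, hs⟩ := hfz v hvx hvy
          obtain ⟨ho1, ho2⟩ := hout v hvx hvy
          rw [fxS', sxS', hf, hs, fxS, sxS]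
          simp [hvy, Ne.symm hxy] <;> omega
    · by_cases huy : u = y
      · rw [huy]
        by_cases hvx : v = x
        · rw [hvx]
          rw [fyS', sxS', fxS', syS', fyS, sxS, fxS, syS]
          simp [Ne.symm hxy]
        · by_cases hvy : v = y
          · rw [hvy]
            rw [fyS', syS', fyS, syS]
            simp [Ne.symm hxy]
          · obtain ⟨hf, hs⟩ := hfz v hvx hvy
            obtain ⟨ho1, ho2⟩ := hout v hvx hvy
            rw [fyS', syS', hf, hs, fyS, syS]
            simp [hvx, hvy] <;> omega
      · obtain ⟨hfu, hsu⟩ := hfz u hux huy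
        by_cases hvx : v = x
        · rw [hvx]
          obtain ⟨ho1, ho2⟩ := hout u hux huy
          rw [fxS', sxS', hfu, hsu, fxS, sxS]
          simp [hux, huy] <;> omega
        · by_cases hvy : v = y
          · rw [hvy]
            obtain ⟨ho1, ho2⟩ := hout u hux huy
            rw [fyS', syS', hfu, hsu, fyS, syS]
            simp [hux, huy] <;> omega
          · obtain ⟨hfv, hsv⟩ := hfz v hvx hvy
            rw [hfu, hsu, hfv, hsv]
            simp [hux, huy]
  have hEq : stringGraph S' = (stringGraph S).deleteEdges {s(x, y)} := by
    ext u v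
    rw [stringGraph_adj, SimpleGraph.deleteEdges_adj, stringGraph_adj]
    simp only [Set.mem_singleton_iff, Sym2.eq, Sym2.rel_iff', Prod.mk.injEq,
      Prod.swap_prod_mk]
    have k := key u v
    tauto
  refine ⟨hEq, ?_⟩
  rw [← hEq]
  exact isIntervalGraph_stringGraph hS'

set_option maxHeartbeats 1000000 in
theorem stmt7 {n : ℕ} (S : Fin (2 * n) → Fin n) (hS : IsStringRep S)
    (i : ℕ) (hi : i + 3 < 2 * n)
    (x y : Fin n) (hxy : x ≠ y)
    (h0 : S ⟨i, by omega⟩ = x) (h1 : S ⟨i + 1, by omega⟩ = y)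
    (h2 : S ⟨i + 2, by omega⟩ = y) (h3 : S ⟨i + 3, hi⟩ = x) :
    stringGraph (S ∘ Equiv.swap ⟨i + 1, by omega⟩ ⟨i + 3, hi⟩) =
      (stringGraph S).deleteEdges {s(x, y)} ∧
    IsIntervalGraph ((stringGraph S).deleteEdges {s(x, y)}) := by
  exact stmt7aux S hS i hi x y hxy h0 h1 h2 h3 _ rfl
end

section
/- Let G be an interval graph that is not complete, given with an interval representation in which all 2n endpoints are distinct. Let j+1 be a vertex of minimal right endpoint among vertices that are not universal, and let y be the vertex whose left endpoint is the smallest among left endpoints lying strictly to the right of the right endpoint of j+1; then y exists, (j+1, y) is a non-edge of G, and G + (j+1, y) is an interval graph. -/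
theorem Set.Icc_inter_Icc_nonempty_iff {α : Type*} [LinearOrder α] {a b c d : α}
    (hab : a ≤ b) (hcd : c ≤ d) : (Icc a b ∩ Icc c d).Nonempty ↔ c ≤ b ∧ a ≤ d := by
  rw [Icc_inter_Icc, nonempty_Icc, sup_le_iff, le_inf_iff, le_inf_iff]
  tauto

namespace SimpleGraph

variable {V : Type*}

structure IsIntervalRep (G : SimpleGraph V) (l r : V → ℝ) : Prop where
  left_le_right : ∀ v, l v ≤ r v
  adj_iff_nonempty : ∀ u v : V, u ≠ v →
    (G.Adj u v ↔ (Set.Icc (l u) (r u) ∩ Set.Icc (l v) (r v)).Nonempty)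

theorem IsIntervalRep.isIntervalGraph {G : SimpleGraph V} {l r : V → ℝ}
    (h : G.IsIntervalRep l r) : IsIntervalGraph G :=
  ⟨l, r, h.left_le_right, h.adj_iff_nonempty⟩

namespace IsIntervalRep

variable {G : SimpleGraph V} {l r : V → ℝ}

theorem adj_iff (h : G.IsIntervalRep l r) {a b : V} (hab : a ≠ b) :
    G.Adj a b ↔ l b ≤ r a ∧ l a ≤ r b :=
  (h.adj_iff_nonempty a b hab).trans
    (Set.Icc_inter_Icc_nonempty_iff (h.left_le_right a) (h.left_le_right b))

theorem not_adj_of_right_lt_left (h : G.IsIntervalRep l r) {a b : V} (hab : r a < l b) :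
    ¬ G.Adj a b := fun hadj =>
  hab.not_ge ((h.adj_iff hadj.ne).1 hadj).1

theorem exists_right_lt_left (h : G.IsIntervalRep l r) {u : V}
    (hu : ¬ ∀ w, w ≠ u → G.Adj u w)
    (humin : ∀ w : V, (¬ ∀ w', w' ≠ w → G.Adj w w') → r u ≤ r w) :
    ∃ w, r u < l w := by
  push Not at hu
  obtain ⟨w, hwu, hnadj⟩ := hu
  refine ⟨w, lt_of_not_ge fun hwr => ?_⟩
  have hrw : r w < l u := by
    by_contra! hlu
    exact hnadj ((h.adj_iff hwu.symm).2 ⟨hwr, hlu⟩)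
  have hw : ¬ ∀ w', w' ≠ w → G.Adj w w' := fun hall => hnadj (hall u hwu.symm).symm
  linarith [humin w hw, h.left_le_right u]

theorem sup_edge_update_right [DecidableEq V] (h : G.IsIntervalRep l r)
    (hl : Function.Injective l) {u y : V} (hy : r u < l y)
    (hmin : ∀ z, r u < l z → l y ≤ l z) :
    (G ⊔ fromEdgeSet {s(u, y)}).IsIntervalRep l (Function.update r u (l y)) := by
  have hlu : l u < l y := (h.left_le_right u).trans_lt hy
  have hle : ∀ v, l v ≤ Function.update r u (l y) v := by
    intro v
    rcases eq_or_ne v u with rfl | hv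
    · simpa using hlu.le
    · simpa [hv] using h.left_le_right v
  have adj_u_iff : ∀ b, b ≠ u → (l b ≤ l y ∧ l u ≤ r b ↔ G.Adj u b ∨ b = y) := by
    intro b hbu
    rw [h.adj_iff hbu.symm]
    constructor
    · rintro ⟨hby, hub⟩
      by_cases hb : r u < l b
      · exact Or.inr (hl (hby.antisymm (hmin b hb)))
      · exact Or.inl ⟨not_lt.1 hb, hub⟩
    · rintro (⟨hbr, hub⟩ | rfl)
      · exact ⟨by linarith, hub⟩
      · exact ⟨le_rfl, hlu.le.trans (h.left_le_right b)⟩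
  refine ⟨hle, fun a b hab => ?_⟩
  rw [Set.Icc_inter_Icc_nonempty_iff (hle a) (hle b), sup_adj, fromEdgeSet_adj,
    Set.mem_singleton_iff, Sym2.eq_iff]
  rcases eq_or_ne a u with rfl | hau
  · simpa [hab, hab.symm, eq_comm (a := b)] using (adj_u_iff b hab.symm).symm
  rcases eq_or_ne b u with rfl | hbu
  · simpa [hab, adj_comm, and_comm] using (adj_u_iff a hab).symm
  simp [hau, hbu, h.adj_iff hab]

end IsIntervalRep

end SimpleGraph

theorem stmt15_general {V : Type*} [Fintype V] (G : SimpleGraph V)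
    (l r : V → ℝ) (hlr : ∀ v, l v ≤ r v)
    (hrep : ∀ u v : V, u ≠ v →
      (G.Adj u v ↔ (Set.Icc (l u) (r u) ∩ Set.Icc (l v) (r v)).Nonempty))
    (hdist : Function.Injective (Sum.elim l r))
    (u : V) (hu : ¬ ∀ w, w ≠ u → G.Adj u w)
    (humin : ∀ w : V, (¬ ∀ w', w' ≠ w → G.Adj w w') → r u ≤ r w) :
    ∃ y : V, r u < l y ∧ (∀ z : V, r u < l z → l y ≤ l z) ∧
      ¬ G.Adj u y ∧
      IsIntervalGraph (G ⊔ SimpleGraph.fromEdgeSet {s(u, y)}) := by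
  classical
  have h : G.IsIntervalRep l r := ⟨hlr, hrep⟩
  obtain ⟨w, hw⟩ := h.exists_right_lt_left hu humin
  obtain ⟨y, hy, hmin⟩ := (Finset.univ.filter fun z => r u < l z).exists_min_image l
    ⟨w, Finset.mem_filter.2 ⟨Finset.mem_univ w, hw⟩⟩
  simp only [Finset.mem_filter, Finset.mem_univ, true_and] at hy hmin
  exact ⟨y, hy, hmin, h.not_adj_of_right_lt_left hy,
    (h.sup_edge_update_right (hdist.comp Sum.inl_injective) hy hmin).isIntervalGraph⟩

theorem stmt15 {V : Type*} [Fintype V] (G : SimpleGraph V)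
    (l r : V → ℝ) (hlr : ∀ v, l v ≤ r v)
    (hrep : ∀ u v : V, u ≠ v →
      (G.Adj u v ↔ (Set.Icc (l u) (r u) ∩ Set.Icc (l v) (r v)).Nonempty))
    (hdist : Function.Injective (Sum.elim l r))
    (hnc : G ≠ ⊤)
    (u : V) (hu : ¬ ∀ w, w ≠ u → G.Adj u w)
    (humin : ∀ w : V, (¬ ∀ w', w' ≠ w → G.Adj w w') → r u ≤ r w) :
    ∃ y : V, r u < l y ∧ (∀ z : V, r u < l z → l y ≤ l z) ∧
      ¬ G.Adj u y ∧
      IsIntervalGraph (G ⊔ SimpleGraph.fromEdgeSet {s(u, y)}) :=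
  stmt15_general G l r hlr hrep hdist u hu humin
end
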